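/- Let φ be the standard normal density and Φ its cdf, fix k, b ∈ ℝ, and let f(z) = c e^{k|z|} φ(z − b) with c^{−1} = e^{kb+k²/2} Φ(k+b) + e^{−kb+k²/2} Φ(k−b). Set p = e^{−kb} Φ(k−b) / (e^{kb} Φ(k+b) + e^{−kb} Φ(k−b)). Then for every z ≤ 0, f(z) = p · φ(z + k − b)/Φ(k − b), and for every z > 0, f(z) = (1 − p) · φ(z − k − b)/Φ(k + b); that is, f is the mixture, with weights p and 1−p, of the normal N(b−k,1) density truncated to (−∞,0) and the normal N(b+k,1) density truncated to (0,∞). -/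

import Mathlib

open MeasureTheory Real Set

noncomputable def phi (x : ℝ) : ℝ := (Real.sqrt (2 * Real.pi))⁻¹ * Real.exp (-(x ^ 2) / 2)

noncomputable def Phi (x : ℝ) : ℝ := ∫ t in Set.Iic x, phi t

/-!
Completing the square gives `e^{kz} φ(z - b) = e^{kb + k²/2} φ(z - b - k)`, so on each half-line
`f` is a constant multiple of a shifted normal density. Shifting the variable identifies the masses of
those densities on the half-lines as `Φ(k - b)` and `Φ(k + b)`, and the constants `c e^{∓kb + k²/2}`
are exactly `p / Φ(k - b)` and `(1 - p) / Φ(k + b)`.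
-/

lemma phi_pos (x : ℝ) : 0 < phi x := by
  unfold phi
  positivity

lemma phi_neg (x : ℝ) : phi (-x) = phi x := by
  simp [phi]

lemma integrable_phi : Integrable phi := by
  have h : phi = fun x => (Real.sqrt (2 * Real.pi))⁻¹ * Real.exp (-(1 / 2) * x ^ 2) := by
    ext x
    unfold phi
    ring_nf
  rw [h]
  exact (integrable_exp_neg_mul_sq (by norm_num)).const_mul _

lemma Phi_pos (x : ℝ) : 0 < Phi x := by
  have hsupp : Function.support phi = univ :=
    eq_univ_of_forall fun y => (phi_pos y).ne'
  rw [Phi, setIntegral_pos_iff_support_of_nonneg_ae (.of_forall fun y => (phi_pos y).le)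
    integrable_phi.integrableOn, hsupp, univ_inter]
  simp

lemma exp_mul_mul_phi_sub (k b z : ℝ) :
    Real.exp (k * z) * phi (z - b) = Real.exp (k * b + k ^ 2 / 2) * phi (z - b - k) := by
  unfold phi
  rw [mul_left_comm, ← Real.exp_add, mul_left_comm (Real.exp _), ← Real.exp_add]
  ring_nf

lemma setIntegral_Iio_comp_add_right {E : Type*} [NormedAddCommGroup E] [NormedSpace ℝ E]
    (f : ℝ → E) (c a : ℝ) : ∫ x in Iio c, f (x + a) = ∫ x in Iio (c + a), f x := by
  have hemb : MeasurableEmbedding (fun x : ℝ => x + a) :=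
    (Homeomorph.addRight a).isClosedEmbedding.measurableEmbedding
  have h := hemb.setIntegral_map (μ := volume) f (Iio (c + a))
  rw [map_add_right_eq_self, preimage_add_const_Iio, add_sub_cancel_right] at h
  exact h.symm

lemma setIntegral_Iio_zero_phi_add (a : ℝ) : ∫ z in Iio (0 : ℝ), phi (z + a) = Phi a := by
  rw [setIntegral_Iio_comp_add_right, zero_add, Phi, integral_Iic_eq_integral_Iio]

lemma setIntegral_Ioi_zero_phi_sub (a : ℝ) : ∫ z in Ioi (0 : ℝ), phi (z - a) = Phi a := by
  have hsymm : (fun z => phi (z - a)) = fun z => phi (-z + a) := by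
    ext z
    rw [← phi_neg, neg_sub, sub_eq_neg_add]
  rw [hsymm, integral_comp_neg_Ioi 0 (fun x => phi (x + a)), neg_zero,
    integral_Iic_eq_integral_Iio, setIntegral_Iio_zero_phi_add]

theorem stmt_17 (k b : ℝ) :
    let c : ℝ := (Real.exp (k * b + k ^ 2 / 2) * Phi (k + b) +
      Real.exp (-(k * b) + k ^ 2 / 2) * Phi (k - b))⁻¹
    let f : ℝ → ℝ := fun z => c * Real.exp (k * |z|) * phi (z - b)
    let p : ℝ := Real.exp (-(k * b)) * Phi (k - b) /
      (Real.exp (k * b) * Phi (k + b) + Real.exp (-(k * b)) * Phi (k - b))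
    (∀ z ≤ (0 : ℝ), f z = p * (phi (z + k - b) / Phi (k - b))) ∧
      (∀ z > (0 : ℝ), f z = (1 - p) * (phi (z - k - b) / Phi (k + b))) ∧
      (∫ z in Set.Iio (0 : ℝ), phi (z + k - b)) = Phi (k - b) ∧
      (∫ z in Set.Ioi (0 : ℝ), phi (z - k - b)) = Phi (k + b) := by
  intro c f p
  have hΦneg := Phi_pos (k - b)
  have hΦpos := Phi_pos (k + b)
  refine ⟨fun z hz => ?_, fun z hz => ?_, ?_, ?_⟩
  · have htilt : Real.exp (k * |z|) * phi (z - b) =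
        Real.exp (-(k * b) + k ^ 2 / 2) * phi (z + k - b) := by
      rw [abs_of_nonpos hz]
      convert exp_mul_mul_phi_sub (-k) b z using 3 <;> ring
    simp only [f, c, p, mul_assoc, htilt, Real.exp_add]
    field_simp
  · have htilt : Real.exp (k * |z|) * phi (z - b) =
        Real.exp (k * b + k ^ 2 / 2) * phi (z - k - b) := by
      rw [abs_of_pos hz, exp_mul_mul_phi_sub, sub_right_comm]
    simp only [f, c, p, mul_assoc, htilt, Real.exp_add]
    field_simp
    ring
  · simpa only [add_sub_assoc] using setIntegral_Iio_zero_phi_add (k - b)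
  · simpa only [sub_sub] using setIntegral_Ioi_zero_phi_sub (k + b)
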